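/- Let q = 2, let k be an odd positive integer, and let d ≥ 1. Then: (a) if d is odd and squarefree, P_d(k) ≠ 0 and its valuation at infinity p_d(k) equals dk + 1; (b) if d is even and squarefree, or d = 4m with m odd and squarefree, then P_d(k) ≠ 0 and p_d(k) = dk; (c) in all remaining cases, either P_d(k) = 0 or p_d(k) > dk + 1. -/

import Mathlib

/-!
Over a finite field with `q` elements, `X ^ q ^ n - X` is the product of the monic irreducibles
whose degree divides `n`. Comparing degrees gives `∑_{e ∣ n} e N(e) = q ^ n`, and comparing the
coefficients of `X ^ (q ^ n - 1)` gives `∑_{e ∣ n} T(e) = -[q ^ n = 2]`, where `N(e)` is the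
number of monic irreducibles of degree `e` and `T(e)` the sum of their subleading coefficients.
Möbius inversion yields `n N(n) = ∑_{e ∣ n} μ(n / e) q ^ e` and, for `q = 2`,
`T(n) = μ(n) mod 2`. For `d = 2 ^ a m` with `m` odd, a term `μ(d / e) 2 ^ e ≠ 0` has `d / e`
squarefree, so `2 ^ (a - 1) ∣ e`; hence every term except `e = a` is divisible by `2 ^ (a + 1)`,
and `N(d)` is odd exactly when `a ∈ {1, 2}` and `m` is squarefree.

Write `-P_d(k) = A / B` with `B = ∏ (℘ ^ k - 1)`, of degree `N dk`, and
`A = ∑_℘ ∏_{℘' ≠ ℘} (℘' ^ k - 1)`. The coefficient of `A` in degree `(N - 1) dk` is `N`, and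
if `N = 0` in the field, the one in degree `(N - 1) dk - 1` is `-k T(d)`. So the valuation
`deg B - deg A` is `dk` when `N` is odd, `dk + 1` when `N` is even and `d` is squarefree, and
larger otherwise.
-/

open Polynomial UniqueFactorizationMonoid Finset
open ArithmeticFunction (moebius_apply_of_squarefree moebius_eq_zero_of_not_squarefree
  moebius_ne_zero_iff_squarefree sum_eq_iff_sum_mul_moebius_eq)
open scoped ArithmeticFunction.Moebius

/-- `P_d(k) = Σ 1/(1 - ℘^k) ∈ F_q(t)`, the (finite) sum over all monic irreducible
`℘ ∈ F_q[t]` of degree `d`. -/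
noncomputable def Pd (Fq : Type*) [Field Fq] (d k : ℕ) : RatFunc Fq :=
  ∑ᶠ ℘ ∈ {P : Polynomial Fq | P.Monic ∧ Irreducible P ∧ P.natDegree = d},
    (1 - algebraMap (Polynomial Fq) (RatFunc Fq) ℘ ^ k)⁻¹

namespace Polynomial

variable {R : Type*} [Ring R] {p : R[X]}

theorem Monic.sub_one [Nontrivial R] (hp : p.Monic) (h : 0 < p.natDegree) : (p - 1).Monic :=
  hp.sub_of_left (by rwa [degree_one, ← natDegree_pos_iff_degree_pos])

theorem natDegree_sub_one : (p - 1).natDegree = p.natDegree := by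
  rw [← C_1, natDegree_sub_C]

theorem nextCoeff_sub_one (h : 0 < p.natDegree) :
    (p - 1).nextCoeff = p.nextCoeff - if p.natDegree = 1 then 1 else 0 := by
  rw [nextCoeff_of_natDegree_pos (natDegree_sub_one (p := p) ▸ h), natDegree_sub_one,
    nextCoeff_of_natDegree_pos h, coeff_sub, coeff_one]
  exact congrArg _ (if_congr (by omega) rfl rfl)

theorem nextCoeff_X_pow_sub_X [Nontrivial R] {N : ℕ} (hN : 2 ≤ N) :
    (X ^ N - X : R[X]).nextCoeff = if N = 2 then -1 else 0 := by
  have hdeg : (X ^ N - X : R[X]).natDegree = N := by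
    rw [natDegree_sub_eq_left_of_natDegree_lt (by rw [natDegree_X, natDegree_X_pow]; omega),
      natDegree_X_pow]
  rw [nextCoeff_of_natDegree_pos (by omega), hdeg, coeff_sub, coeff_X_pow, coeff_X,
    if_neg (show N - 1 ≠ N by omega), zero_sub]
  by_cases h : N = 2
  · simp [h]
  · rw [if_neg h, if_neg (by omega), neg_zero]

theorem natDegree_ne_of_coeff_eq_zero {R : Type*} [Semiring R] {p : R[X]} {n : ℕ}
    (hp : p ≠ 0) (hn : p.coeff n = 0) : p.natDegree ≠ n := by
  rintro rfl
  exact hp (leadingCoeff_eq_zero.mp hn)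

end Polynomial

section SumProdErase

variable {R ι : Type*} [CommRing R] [DecidableEq ι] {s : Finset ι} {b : ι → R[X]} {n : ℕ}

theorem natDegree_prod_erase_of_monic (hb : ∀ i ∈ s, (b i).Monic)
    (hdeg : ∀ i ∈ s, (b i).natDegree = n) {i : ι} (hi : i ∈ s) :
    (∏ j ∈ s.erase i, b j).natDegree = (#s - 1) * n := by
  rw [natDegree_prod_of_monic _ _ fun j hj => hb j (mem_of_mem_erase hj),
    sum_congr rfl fun j hj => hdeg j (mem_of_mem_erase hj), sum_const, card_erase_of_mem hi,
    smul_eq_mul]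

theorem natDegree_sum_prod_erase_le (hb : ∀ i ∈ s, (b i).Monic)
    (hdeg : ∀ i ∈ s, (b i).natDegree = n) :
    (∑ i ∈ s, ∏ j ∈ s.erase i, b j).natDegree ≤ (#s - 1) * n :=
  natDegree_sum_le_of_forall_le _ _ fun _ hi => (natDegree_prod_erase_of_monic hb hdeg hi).le

theorem coeff_sum_prod_erase (hb : ∀ i ∈ s, (b i).Monic)
    (hdeg : ∀ i ∈ s, (b i).natDegree = n) :
    (∑ i ∈ s, ∏ j ∈ s.erase i, b j).coeff ((#s - 1) * n) = #s := by
  rw [finsetSum_coeff, sum_congr rfl fun i hi => ?_, sum_const, nsmul_one]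
  rw [← natDegree_prod_erase_of_monic hb hdeg hi]
  exact (monic_prod_of_monic _ _ fun j hj => hb j (mem_of_mem_erase hj)).coeff_natDegree

theorem coeff_sum_prod_erase_sub_one (hb : ∀ i ∈ s, (b i).Monic)
    (hdeg : ∀ i ∈ s, (b i).natDegree = n) (hn : n ≠ 0) (hs : 2 ≤ #s) :
    (∑ i ∈ s, ∏ j ∈ s.erase i, b j).coeff ((#s - 1) * n - 1) =
      ((#s : R) - 1) * ∑ i ∈ s, (b i).nextCoeff := by
  have hpos : 0 < (#s - 1) * n := Nat.mul_pos (by omega) (Nat.pos_of_ne_zero hn)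
  have hterm : ∀ i ∈ s, (∏ j ∈ s.erase i, b j).coeff ((#s - 1) * n - 1) =
      ∑ j ∈ s, (b j).nextCoeff - (b i).nextCoeff := fun i hi => by
    rw [← natDegree_prod_erase_of_monic hb hdeg hi,
      ← nextCoeff_of_natDegree_pos (by rwa [natDegree_prod_erase_of_monic hb hdeg hi]),
      Monic.nextCoeff_prod _ _ fun j hj => hb j (mem_of_mem_erase hj), sum_erase_eq_sub hi]
  rw [finsetSum_coeff, sum_congr rfl hterm, sum_sub_distrib, sum_const, nsmul_eq_mul]
  ring

end SumProdErase

theorem sum_inv_eq_sum_prod_erase_div {K ι : Type*} [Field K] [DecidableEq ι] {s : Finset ι}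
    {x : ι → K} (hx : ∀ i ∈ s, x i ≠ 0) :
    ∑ i ∈ s, (x i)⁻¹ = (∑ i ∈ s, ∏ j ∈ s.erase i, x j) / ∏ i ∈ s, x i := by
  rw [sum_div]
  refine sum_congr rfl fun i hi => ?_
  rw [← mul_prod_erase s x hi, div_mul_cancel_right₀
    (prod_ne_zero_iff.mpr fun j hj => hx j (mem_of_mem_erase hj))]

section FiniteField

variable (K : Type*) [Field K] [Finite K]

-- Taking the factors of `X ^ q ^ n - X` makes finiteness automatic; `mem_monicIrreducibles`
-- is the intended characterization.
open scoped Classical in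
noncomputable def monicIrreducibles (n : ℕ) : Finset K[X] :=
  (normalizedFactors (X ^ Nat.card K ^ n - X : K[X])).toFinset.filter (·.natDegree = n)

variable {K}

theorem monic_X_pow_card_pow_sub_X {n : ℕ} (hn : n ≠ 0) :
    (X ^ Nat.card K ^ n - X : K[X]).Monic :=
  monic_X_pow_sub <| by
    rw [degree_X]
    exact_mod_cast Nat.one_lt_pow hn Finite.one_lt_card

theorem mem_monicIrreducibles {n : ℕ} {P : K[X]} :
    P ∈ monicIrreducibles K n ↔ P.Monic ∧ Irreducible P ∧ P.natDegree = n := by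
  classical
  rcases eq_or_ne n 0 with rfl | hn
  · simpa [monicIrreducibles] using fun _ hi => hi.natDegree_pos.ne'
  rw [monicIrreducibles, mem_filter, Multiset.mem_toFinset,
    Polynomial.mem_normalizedFactors_iff ((monic_X_pow_card_pow_sub_X hn).ne_zero)]
  constructor
  · rintro ⟨⟨hi, hm, -⟩, hdeg⟩
    exact ⟨hm, hi, hdeg⟩
  · rintro ⟨hm, hi, rfl⟩
    exact ⟨⟨hi, hm, hi.natDegree_dvd_iff_dvd_X_pow_card_pow_sub_X.mp dvd_rfl⟩, rfl⟩

theorem coe_monicIrreducibles (n : ℕ) :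
    (monicIrreducibles K n : Set K[X]) = {P | P.Monic ∧ Irreducible P ∧ P.natDegree = n} :=
  Set.ext fun _ => mem_monicIrreducibles

open scoped Classical in
theorem biUnion_monicIrreducibles {n : ℕ} (hn : n ≠ 0) :
    n.divisors.biUnion (monicIrreducibles K) =
      (normalizedFactors (X ^ Nat.card K ^ n - X : K[X])).toFinset := by
  ext P
  rw [mem_biUnion, Multiset.mem_toFinset,
    Polynomial.mem_normalizedFactors_iff ((monic_X_pow_card_pow_sub_X hn).ne_zero)]
  constructor
  · rintro ⟨e, he, hP⟩
    obtain ⟨hm, hi, rfl⟩ := mem_monicIrreducibles.mp hP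
    exact ⟨hi, hm,
      hi.natDegree_dvd_iff_dvd_X_pow_card_pow_sub_X.mp (Nat.dvd_of_mem_divisors he)⟩
  · rintro ⟨hi, hm, hdvd⟩
    exact ⟨P.natDegree, Nat.mem_divisors.mpr
      ⟨hi.natDegree_dvd_iff_dvd_X_pow_card_pow_sub_X.mpr hdvd, hn⟩,
      mem_monicIrreducibles.mpr ⟨hm, hi, rfl⟩⟩

theorem pairwiseDisjoint_monicIrreducibles (s : Set ℕ) :
    s.PairwiseDisjoint (monicIrreducibles K) := fun _ _ _ _ hne =>
  disjoint_left.mpr fun _ h₁ h₂ =>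
    hne ((mem_monicIrreducibles.mp h₁).2.2.symm.trans (mem_monicIrreducibles.mp h₂).2.2)

theorem separable_X_pow_card_pow_sub_X {n : ℕ} (hn : n ≠ 0) :
    (X ^ Nat.card K ^ n - X : K[X]).Separable := by
  have := Fintype.ofFinite K
  refine galois_poly_separable (ringChar K) _ (dvd_pow (ringChar.dvd ?_) hn)
  rw [Nat.card_eq_fintype_card, Nat.cast_card_eq_zero]

theorem prod_divisors_prod_monicIrreducibles {n : ℕ} (hn : n ≠ 0) :
    ∏ e ∈ n.divisors, ∏ P ∈ monicIrreducibles K e, P = X ^ Nat.card K ^ n - X := by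
  classical
  set f : K[X] := X ^ Nat.card K ^ n - X
  have hf : f ≠ 0 := (monic_X_pow_card_pow_sub_X hn).ne_zero
  have hnodup : (normalizedFactors f).Nodup :=
    (squarefree_iff_nodup_normalizedFactors hf).mp (separable_X_pow_card_pow_sub_X hn).squarefree
  rw [← prod_biUnion (pairwiseDisjoint_monicIrreducibles _), biUnion_monicIrreducibles hn,
    prod_eq_multiset_prod, Multiset.toFinset_val, hnodup.dedup, Multiset.map_id',
    prod_normalizedFactors_eq hf, (monic_X_pow_card_pow_sub_X hn).normalize_eq_self]

theorem sum_divisors_mul_card_monicIrreducibles {n : ℕ} (hn : n ≠ 0) :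
    ∑ e ∈ n.divisors, e * #(monicIrreducibles K e) = Nat.card K ^ n := by
  rw [← FiniteField.X_pow_card_pow_sub_X_natDegree_eq K hn Finite.one_lt_card,
    ← prod_divisors_prod_monicIrreducibles hn, natDegree_prod_of_monic _ _ fun e _ =>
      monic_prod_of_monic _ _ fun P hP => (mem_monicIrreducibles.mp hP).1]
  refine sum_congr rfl fun e _ => ?_
  rw [natDegree_prod_of_monic _ _ fun P hP => (mem_monicIrreducibles.mp hP).1,
    sum_congr rfl fun P hP => (mem_monicIrreducibles.mp hP).2.2, sum_const, smul_eq_mul, mul_comm]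

theorem sum_divisors_sum_nextCoeff_monicIrreducibles {n : ℕ} (hn : n ≠ 0) :
    ∑ e ∈ n.divisors, ∑ P ∈ monicIrreducibles K e, P.nextCoeff =
      (X ^ Nat.card K ^ n - X : K[X]).nextCoeff := by
  rw [← prod_divisors_prod_monicIrreducibles hn, Monic.nextCoeff_prod _ _ fun e _ =>
      monic_prod_of_monic _ _ fun P hP => (mem_monicIrreducibles.mp hP).1]
  exact sum_congr rfl fun e _ =>
    (Monic.nextCoeff_prod _ _ fun P hP => (mem_monicIrreducibles.mp hP).1).symm

theorem mul_card_monicIrreducibles {n : ℕ} (hn : n ≠ 0) :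
    (n : ℤ) * #(monicIrreducibles K n) =
      ∑ x ∈ n.divisorsAntidiagonal, μ x.1 * (Nat.card K : ℤ) ^ x.2 :=
  ((sum_eq_iff_sum_mul_moebius_eq (f := fun e => (e : ℤ) * #(monicIrreducibles K e))).mp
    (fun m hm => by exact_mod_cast sum_divisors_mul_card_monicIrreducibles (K := K) hm.ne') n
    (Nat.pos_of_ne_zero hn)).symm

end FiniteField

theorem moebius_cast_zmod_two (n : ℕ) :
    ((μ n : ℤ) : ZMod 2) = if Squarefree n then 1 else 0 := by
  split_ifs with h
  · rw [moebius_apply_of_squarefree h, Int.cast_pow, Int.cast_neg, Int.cast_one,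
      CharTwo.neg_eq, one_pow]
  · rw [moebius_eq_zero_of_not_squarefree h, Int.cast_zero]

theorem sum_nextCoeff_monicIrreducibles_zmod_two {n : ℕ} (hn : n ≠ 0) :
    ∑ P ∈ monicIrreducibles (ZMod 2) n, P.nextCoeff = if Squarefree n then 1 else 0 := by
  have hsum : ∀ m > 0, ∑ e ∈ m.divisors, ∑ P ∈ monicIrreducibles (ZMod 2) e, P.nextCoeff =
      if m = 1 then 1 else 0 := fun m hm => by
    rw [sum_divisors_sum_nextCoeff_monicIrreducibles hm.ne', Nat.card_zmod,
      nextCoeff_X_pow_sub_X (Nat.le_self_pow hm.ne' 2), CharTwo.neg_eq]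
    exact if_congr (by simpa using Nat.pow_right_inj (m := m) (n := 1) (le_refl 2)) rfl rfl
  rw [← (sum_eq_iff_sum_mul_moebius_eq.mp hsum) n (Nat.pos_of_ne_zero hn),
    sum_eq_single (n, 1), if_pos rfl, mul_one, moebius_cast_zmod_two]
  · rintro ⟨x, y⟩ hxy hne
    rw [if_neg, mul_zero]
    rintro rfl
    exact hne (by simpa using (Nat.mem_divisorsAntidiagonal.mp hxy).1)
  · simp [hn]

theorem two_pow_pred_le_of_moebius_ne_zero {a m x y : ℕ} (hm : Odd m)
    (hxy : x * y = 2 ^ a * m) (hx : μ x ≠ 0) : 2 ^ (a - 1) ≤ y := by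
  have hsq : Squarefree x := moebius_ne_zero_iff_squarefree.mp hx
  have hy : y ≠ 0 := by rintro rfl; simp [hm.pos.ne'] at hxy
  have hval : x.factorization 2 + y.factorization 2 = a := by
    have := congrArg (·.factorization 2) hxy
    simpa [Nat.factorization_mul hsq.ne_zero hy, Nat.factorization_mul (pow_ne_zero a two_ne_zero)
      hm.pos.ne', Nat.prime_two.factorization_self,
      Nat.factorization_eq_zero_of_not_dvd hm.not_two_dvd_nat] using this
  calc 2 ^ (a - 1) ≤ 2 ^ y.factorization 2 :=
        Nat.pow_le_pow_right two_pos (by have := hsq.natFactorization_le_one 2; omega)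
    _ ≤ y := Nat.ordProj_le 2 hy

theorem eq_of_moebius_ne_zero_of_le {a m x y : ℕ} (hm : Odd m) (hxy : x * y = 2 ^ a * m)
    (hx : μ x ≠ 0) (hya : y ≤ a) : (a = 1 ∨ a = 2) ∧ x = 2 * m ∧ y = a := by
  have hle := two_pow_pred_le_of_moebius_ne_zero hm hxy hx
  obtain rfl | rfl | rfl | ⟨c, rfl⟩ : a = 0 ∨ a = 1 ∨ a = 2 ∨ ∃ c, a = c + 3 :=
    by rcases a with _ | _ | _ | c <;> simp
  · omega
  · obtain rfl : y = 1 := by omega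
    exact ⟨Or.inl rfl, by omega, rfl⟩
  · obtain rfl : y = 2 := by omega
    exact ⟨Or.inr rfl, by omega, rfl⟩
  · have := Nat.lt_two_pow_self (n := c)
    rw [show c + 3 - 1 = c + 2 by omega, pow_add] at hle
    omega

theorem sum_moebius_mul_two_pow_modEq {a m : ℕ} (hm : Odd m) :
    ∑ p ∈ (2 ^ a * m).divisorsAntidiagonal, (μ p.1 : ℤ) * 2 ^ p.2 ≡
      if a = 1 ∨ a = 2 then μ (2 * m) * 2 ^ a else 0 [ZMOD 2 ^ (a + 1)] := by
  have hdvd : ∀ p ∈ (2 ^ a * m).divisorsAntidiagonal,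
      ¬((a = 1 ∨ a = 2) ∧ p = (2 * m, a)) → (2 : ℤ) ^ (a + 1) ∣ μ p.1 * 2 ^ p.2 := by
    rintro ⟨x, y⟩ hp hne
    by_cases hx : μ x = 0
    · simp [hx]
    by_cases hya : y ≤ a
    · obtain ⟨ha, rfl, rfl⟩ :=
        eq_of_moebius_ne_zero_of_le hm (Nat.mem_divisorsAntidiagonal.mp hp).1 hx hya
      exact absurd ⟨ha, rfl⟩ hne
    · exact (pow_dvd_pow 2 (by omega)).mul_left _
  split_ifs with ha
  · have hmem : (2 * m, a) ∈ (2 ^ a * m).divisorsAntidiagonal :=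
      Nat.mem_divisorsAntidiagonal.mpr
        ⟨by rcases ha with rfl | rfl <;> ring, mul_ne_zero (by positivity) hm.pos.ne'⟩
    rw [← sum_erase_add _ _ hmem]
    exact Int.add_modEq_right_iff.mpr
      (dvd_sum fun p hp => hdvd p (mem_of_mem_erase hp) fun h => ne_of_mem_erase hp h.2)
  · exact Int.modEq_zero_iff_dvd.mpr (dvd_sum fun p hp => hdvd p hp fun h => ha h.1)

theorem squarefree_two_mul_iff {m : ℕ} (hm : Odd m) : Squarefree (2 * m) ↔ Squarefree m := by
  rw [Nat.squarefree_mul_iff, Nat.coprime_two_left]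
  exact ⟨fun h => h.2.2, fun h => ⟨hm, Nat.squarefree_two, h⟩⟩

theorem odd_card_monicIrreducibles_zmod_two_pow_mul_iff {a m : ℕ} (hm : Odd m) :
    Odd #(monicIrreducibles (ZMod 2) (2 ^ a * m)) ↔ (a = 1 ∨ a = 2) ∧ Squarefree m := by
  have hmodEq := sum_moebius_mul_two_pow_modEq (a := a) hm
  have hcard := mul_card_monicIrreducibles (K := ZMod 2)
    (mul_ne_zero (pow_ne_zero a two_ne_zero) hm.pos.ne')
  rw [Nat.card_zmod, Nat.cast_ofNat] at hcard
  rw [← hcard] at hmodEq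
  have hodd : Odd #(monicIrreducibles (ZMod 2) (2 ^ a * m)) ↔
      ¬(2 : ℤ) ^ (a + 1) ∣
        ((2 ^ a * m : ℕ) : ℤ) * #(monicIrreducibles (ZMod 2) (2 ^ a * m)) := by
    push_cast
    rw [mul_assoc, pow_succ, mul_dvd_mul_iff_left (by positivity), ← even_iff_two_dvd]
    simp [Int.even_mul, hm]
  rw [hodd, hmodEq.dvd_iff]
  split_ifs with ha
  · rw [pow_succ, mul_comm (μ _ : ℤ), mul_dvd_mul_iff_left (by positivity),
      ← Nat.cast_ofNat (R := ℤ) (n := 2), ← ZMod.intCast_zmod_eq_zero_iff_dvd,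
      moebius_cast_zmod_two]
    simp [ha, squarefree_two_mul_iff hm]
  · simp [ha]

theorem eq_one_or_two_and_squarefree_iff {a m : ℕ} (hm : Odd m) :
    (a = 1 ∨ a = 2) ∧ Squarefree m ↔ (Even (2 ^ a * m) ∧ Squarefree (2 ^ a * m)) ∨
      ∃ m' : ℕ, Odd m' ∧ Squarefree m' ∧ 2 ^ a * m = 4 * m' := by
  constructor
  · rintro ⟨rfl | rfl, hsq⟩
    · exact Or.inl ⟨by simp, by simpa [squarefree_two_mul_iff hm]⟩
    · exact Or.inr ⟨m, hm, hsq, by norm_num⟩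
  rintro (⟨he, hsq⟩ | ⟨m', hm', hsq', he⟩)
  · refine ⟨Or.inl ?_, hsq.squarefree_of_dvd (dvd_mul_left m _)⟩
    rcases a with _ | _ | a
    · exact absurd he (by simpa using hm)
    · rfl
    · exact absurd (hsq 2 ⟨2 ^ a * m, by ring⟩) (by decide)
  · obtain ⟨t, rfl⟩ := hm
    rcases a with _ | _ | _ | a
    · omega
    · omega
    · exact ⟨Or.inr rfl, by rwa [show 2 * t + 1 = m' by omega]⟩
    · have : m' = 2 * (2 ^ a * (2 * t + 1)) := by simp only [pow_succ] at he; linarith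
      exact absurd (this ▸ hm') (by simp)

theorem odd_card_monicIrreducibles_zmod_two_iff {d : ℕ} (hd : d ≠ 0) :
    Odd #(monicIrreducibles (ZMod 2) d) ↔
      (Even d ∧ Squarefree d) ∨ ∃ m : ℕ, Odd m ∧ Squarefree m ∧ d = 4 * m := by
  obtain ⟨a, m, hm, rfl⟩ := Nat.exists_eq_two_pow_mul_odd hd
  rw [odd_card_monicIrreducibles_zmod_two_pow_mul_iff hm, eq_one_or_two_and_squarefree_iff hm]

theorem Nat.two_le_of_cast_eq_zero {R : Type*} [AddMonoidWithOne R] [NeZero (1 : R)] {n : ℕ}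
    (h : (n : R) = 0) (hn : n ≠ 0) : 2 ≤ n := by
  by_contra! hlt
  obtain rfl : n = 1 := by omega
  exact one_ne_zero (Nat.cast_one (R := R) ▸ h)

theorem Nat.mul_eq_sub_one_mul_add {n : ℕ} (hn : n ≠ 0) (m : ℕ) :
    n * m = (n - 1) * m + m := by
  rw [← add_one_mul, Nat.sub_add_cancel (Nat.one_le_iff_ne_zero.mpr hn)]

section Pd

variable {K : Type*} [Field K] [Finite K] {d k : ℕ}

theorem pos_of_mem_monicIrreducibles {P : K[X]} (hP : P ∈ monicIrreducibles K d) : 0 < d :=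
  (mem_monicIrreducibles.mp hP).2.2 ▸ (mem_monicIrreducibles.mp hP).2.1.natDegree_pos

theorem monic_and_natDegree_pow_sub_one {P : K[X]} (hP : P ∈ monicIrreducibles K d)
    (hk : k ≠ 0) : (P ^ k - 1).Monic ∧ (P ^ k - 1).natDegree = d * k := by
  obtain ⟨hm, -, hdeg⟩ := mem_monicIrreducibles.mp hP
  have hdeg' : (P ^ k).natDegree = d * k := by rw [hm.natDegree_pow, hdeg, mul_comm]
  have hpos : 0 < (P ^ k).natDegree :=
    hdeg' ▸ Nat.mul_pos (pos_of_mem_monicIrreducibles hP) (Nat.pos_of_ne_zero hk)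
  exact ⟨(hm.pow k).sub_one hpos, natDegree_sub_one.trans hdeg'⟩

variable (K d k)

noncomputable def PdDen : K[X] := ∏ P ∈ monicIrreducibles K d, (P ^ k - 1)

open scoped Classical in
noncomputable def PdNum : K[X] :=
  ∑ P ∈ monicIrreducibles K d, ∏ Q ∈ (monicIrreducibles K d).erase P, (Q ^ k - 1)

variable {K d k}

theorem Pd_eq_neg_div (hk : k ≠ 0) :
    Pd K d k = -(algebraMap K[X] (RatFunc K) (PdNum K d k) /
      algebraMap K[X] (RatFunc K) (PdDen K d k)) := by
  classical
  have hne : ∀ P ∈ monicIrreducibles K d, algebraMap K[X] (RatFunc K) (P ^ k - 1) ≠ 0 :=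
    fun P hP => (map_ne_zero_iff _ (IsFractionRing.injective K[X] (RatFunc K))).mpr
      (monic_and_natDegree_pow_sub_one hP hk).1.ne_zero
  rw [Pd, ← coe_monicIrreducibles, finsum_mem_coe_finset, PdNum, PdDen]
  simp only [map_sum, map_prod]
  rw [← sum_inv_eq_sum_prod_erase_div hne, ← sum_neg_distrib]
  refine sum_congr rfl fun P _ => ?_
  rw [map_sub, map_pow, map_one, ← inv_neg, neg_sub]

theorem monic_PdDen (hk : k ≠ 0) : (PdDen K d k).Monic :=
  monic_prod_of_monic _ _ fun _ hP => (monic_and_natDegree_pow_sub_one hP hk).1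

theorem natDegree_PdDen (hk : k ≠ 0) :
    (PdDen K d k).natDegree = #(monicIrreducibles K d) * (d * k) := by
  rw [PdDen, natDegree_prod_of_monic _ _ fun _ hP => (monic_and_natDegree_pow_sub_one hP hk).1,
    sum_congr rfl fun _ hP => (monic_and_natDegree_pow_sub_one hP hk).2, sum_const, smul_eq_mul]

theorem Pd_eq_zero (hk : k ≠ 0) (hnum : PdNum K d k = 0) : Pd K d k = 0 := by
  rw [Pd_eq_neg_div hk, hnum, map_zero, zero_div, neg_zero]

theorem Pd_ne_zero_and_neg_intDegree_eq (hk : k ≠ 0) (hnum : PdNum K d k ≠ 0) :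
    Pd K d k ≠ 0 ∧ -(Pd K d k).intDegree =
      ((#(monicIrreducibles K d) * (d * k) : ℕ) : ℤ) - (PdNum K d k).natDegree := by
  have hinj := IsFractionRing.injective K[X] (RatFunc K)
  have hnum' := (map_ne_zero_iff _ hinj).mpr hnum
  have hden' := (map_ne_zero_iff _ hinj).mpr (monic_PdDen (d := d) hk).ne_zero
  rw [Pd_eq_neg_div hk, RatFunc.intDegree_neg, RatFunc.intDegree_div hnum' hden',
    RatFunc.intDegree_polynomial, RatFunc.intDegree_polynomial, natDegree_PdDen hk]
  exact ⟨neg_ne_zero.mpr (div_ne_zero hnum' hden'), by ring⟩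

open scoped Classical in
theorem natDegree_PdNum_le (hk : k ≠ 0) :
    (PdNum K d k).natDegree ≤ (#(monicIrreducibles K d) - 1) * (d * k) :=
  natDegree_sum_prod_erase_le (fun _ hP => (monic_and_natDegree_pow_sub_one hP hk).1)
    fun _ hP => (monic_and_natDegree_pow_sub_one hP hk).2

open scoped Classical in
theorem coeff_PdNum (hk : k ≠ 0) :
    (PdNum K d k).coeff ((#(monicIrreducibles K d) - 1) * (d * k)) = #(monicIrreducibles K d) :=
  coeff_sum_prod_erase (fun _ hP => (monic_and_natDegree_pow_sub_one hP hk).1)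
    fun _ hP => (monic_and_natDegree_pow_sub_one hP hk).2

theorem nextCoeff_pow_sub_one {P : K[X]} (hP : P ∈ monicIrreducibles K d) (hk : k ≠ 0) :
    (P ^ k - 1).nextCoeff = k * P.nextCoeff - if d * k = 1 then 1 else 0 := by
  obtain ⟨hm, -, hdeg⟩ := mem_monicIrreducibles.mp hP
  have hdeg' : (P ^ k).natDegree = d * k := by rw [hm.natDegree_pow, hdeg, mul_comm]
  rw [nextCoeff_sub_one (hdeg' ▸ Nat.mul_pos (pos_of_mem_monicIrreducibles hP)
    (Nat.pos_of_ne_zero hk)), hm.nextCoeff_pow, hdeg', nsmul_eq_mul]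

open scoped Classical in
theorem coeff_PdNum_sub_one (hk : k ≠ 0) (hN : 2 ≤ #(monicIrreducibles K d)) :
    (PdNum K d k).coeff ((#(monicIrreducibles K d) - 1) * (d * k) - 1) =
      ((#(monicIrreducibles K d) : K) - 1) * ((k : K) *
        ∑ P ∈ monicIrreducibles K d, P.nextCoeff -
          #(monicIrreducibles K d) * if d * k = 1 then 1 else 0) := by
  obtain ⟨P, hP⟩ := card_pos.mp (by omega : 0 < #(monicIrreducibles K d))
  rw [PdNum, coeff_sum_prod_erase_sub_one (fun _ hP => (monic_and_natDegree_pow_sub_one hP hk).1)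
    (fun _ hP => (monic_and_natDegree_pow_sub_one hP hk).2)
    (Nat.mul_ne_zero (pos_of_mem_monicIrreducibles hP).ne' hk) hN,
    sum_congr rfl fun _ hQ => nextCoeff_pow_sub_one hQ hk, sum_sub_distrib, ← mul_sum, sum_const,
    nsmul_eq_mul]

theorem Pd_ne_zero_and_neg_intDegree_eq_of_cast_card_ne_zero (hk : k ≠ 0)
    (hN : (#(monicIrreducibles K d) : K) ≠ 0) :
    Pd K d k ≠ 0 ∧ -(Pd K d k).intDegree = ((d * k : ℕ) : ℤ) := by
  have hcoeff := coeff_PdNum (K := K) (d := d) hk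
  have hnum : PdNum K d k ≠ 0 := fun h => hN (by rw [← hcoeff, h, coeff_zero])
  have hdeg := natDegree_eq_of_le_of_coeff_ne_zero (natDegree_PdNum_le hk) (hcoeff ▸ hN)
  have hND := Nat.mul_eq_sub_one_mul_add (n := #(monicIrreducibles K d))
    (fun h => hN (by rw [h, Nat.cast_zero])) (d * k)
  obtain ⟨hne, hval⟩ := Pd_ne_zero_and_neg_intDegree_eq hk hnum
  exact ⟨hne, by omega⟩

theorem coeff_PdNum_sub_one_of_cast_card_eq_zero (hk : k ≠ 0)
    (hN : (#(monicIrreducibles K d) : K) = 0) (hN0 : #(monicIrreducibles K d) ≠ 0) :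
    (PdNum K d k).coeff ((#(monicIrreducibles K d) - 1) * (d * k) - 1) =
      -((k : K) * ∑ P ∈ monicIrreducibles K d, P.nextCoeff) := by
  rw [coeff_PdNum_sub_one hk (Nat.two_le_of_cast_eq_zero hN hN0), hN]
  ring

theorem Pd_ne_zero_and_neg_intDegree_eq_of_cast_card_eq_zero (hk : k ≠ 0)
    (hN : (#(monicIrreducibles K d) : K) = 0)
    (hT : (k : K) * ∑ P ∈ monicIrreducibles K d, P.nextCoeff ≠ 0) :
    Pd K d k ≠ 0 ∧ -(Pd K d k).intDegree = ((d * k + 1 : ℕ) : ℤ) := by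
  have hN0 : #(monicIrreducibles K d) ≠ 0 := fun h => hT (by simp [card_eq_zero.mp h])
  have hcoeff := coeff_PdNum_sub_one_of_cast_card_eq_zero hk hN hN0
  have hnum : PdNum K d k ≠ 0 := fun h => hT (by rw [← neg_eq_zero, ← hcoeff, h, coeff_zero])
  have htop := natDegree_ne_of_coeff_eq_zero hnum (by rw [coeff_PdNum (K := K) hk, hN])
  have hge := le_natDegree_of_ne_zero (p := PdNum K d k) (by rwa [hcoeff, neg_ne_zero])
  have hle := natDegree_PdNum_le (K := K) (d := d) hk
  have hND := Nat.mul_eq_sub_one_mul_add hN0 (d * k)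
  obtain ⟨hne, hval⟩ := Pd_ne_zero_and_neg_intDegree_eq hk hnum
  exact ⟨hne, by omega⟩

theorem Pd_eq_zero_or_lt_neg_intDegree_of_cast_card_eq_zero (hk : k ≠ 0)
    (hN : (#(monicIrreducibles K d) : K) = 0)
    (hT : (k : K) * ∑ P ∈ monicIrreducibles K d, P.nextCoeff = 0) :
    Pd K d k = 0 ∨ ((d * k + 1 : ℕ) : ℤ) < -(Pd K d k).intDegree := by
  by_cases hnum : PdNum K d k = 0
  · exact Or.inl (Pd_eq_zero hk hnum)
  have hN0 : #(monicIrreducibles K d) ≠ 0 := fun h => hnum (by simp [PdNum, card_eq_zero.mp h])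
  have htop := natDegree_ne_of_coeff_eq_zero hnum (by rw [coeff_PdNum (K := K) hk, hN])
  have hnext := natDegree_ne_of_coeff_eq_zero hnum
    (by rw [coeff_PdNum_sub_one_of_cast_card_eq_zero hk hN hN0, hT, neg_zero])
  have hle := natDegree_PdNum_le (K := K) (d := d) hk
  have hND := Nat.mul_eq_sub_one_mul_add hN0 (d * k)
  obtain ⟨-, hval⟩ := Pd_ne_zero_and_neg_intDegree_eq hk hnum
  exact Or.inr (by omega)

end Pd

/-- (q = 2, k odd, d ≥ 1) (a) If `d` is odd squarefree then `P_d(k) ≠ 0` and its valuation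
at infinity is `dk + 1`; (b) if `d` is even squarefree, or `d = 4m` with `m` odd squarefree,
then `P_d(k) ≠ 0` with valuation `dk`; (c) otherwise `P_d(k) = 0` or the valuation
exceeds `dk + 1`. -/
theorem stmt_12 (d k : ℕ) (hd : 1 ≤ d) (hk0 : 0 < k) (hk : Odd k) :
    (Odd d ∧ Squarefree d →
      Pd (ZMod 2) d k ≠ 0 ∧ -(Pd (ZMod 2) d k).intDegree = ((d * k + 1 : ℕ) : ℤ)) ∧
    ((Even d ∧ Squarefree d) ∨ (∃ m : ℕ, Odd m ∧ Squarefree m ∧ d = 4 * m) →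
      Pd (ZMod 2) d k ≠ 0 ∧ -(Pd (ZMod 2) d k).intDegree = ((d * k : ℕ) : ℤ)) ∧
    (¬(Squarefree d ∨ ∃ m : ℕ, Odd m ∧ Squarefree m ∧ d = 4 * m) →
      Pd (ZMod 2) d k = 0 ∨ ((d * k + 1 : ℕ) : ℤ) < -(Pd (ZMod 2) d k).intDegree) := by
  have hd0 : d ≠ 0 := Nat.one_le_iff_ne_zero.mp hd
  have hT : (k : ZMod 2) * ∑ P ∈ monicIrreducibles (ZMod 2) d, P.nextCoeff =
      if Squarefree d then 1 else 0 := by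
    rw [sum_nextCoeff_monicIrreducibles_zmod_two hd0, hk.natCast_zmod_two, one_mul]
  have hN := odd_card_monicIrreducibles_zmod_two_iff hd0
  have hN_even :
      ¬((Even d ∧ Squarefree d) ∨ ∃ m : ℕ, Odd m ∧ Squarefree m ∧ d = 4 * m) →
        (#(monicIrreducibles (ZMod 2) d) : ZMod 2) = 0 := fun h => by
    rwa [ZMod.natCast_eq_zero_iff_even, ← Nat.not_odd_iff_even, hN]
  refine ⟨fun ⟨hodd, hsq⟩ => ?_, fun h => ?_, fun h => ?_⟩
  · refine Pd_ne_zero_and_neg_intDegree_eq_of_cast_card_eq_zero hk0.ne' (hN_even ?_)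
      (by rw [hT, if_pos hsq]; exact one_ne_zero)
    rintro (⟨he, -⟩ | ⟨m, -, -, rfl⟩)
    · exact Nat.not_even_iff_odd.mpr hodd he
    · exact Nat.not_even_iff_odd.mpr hodd ⟨2 * m, by ring⟩
  · exact Pd_ne_zero_and_neg_intDegree_eq_of_cast_card_ne_zero hk0.ne'
      (ZMod.natCast_ne_zero_iff_odd.mpr (hN.mpr h))
  · refine Pd_eq_zero_or_lt_neg_intDegree_of_cast_card_eq_zero hk0.ne' (hN_even ?_)
      (by rw [hT, if_neg fun h' => h (Or.inl h')])
    rintro (⟨-, hsq⟩ | h')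
    exacts [h (Or.inl hsq), h (Or.inr h')]
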